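/- Let Q ∈ S₋² be a negative semidefinite symmetric 2×2 matrix and λ > 0. Then the set {(F̄, v, ϑ) : v > 0, F̄·v ≤ (1, ϑ) Q (1, ϑ)^T} is convex. -/

import Mathlib

/-!
Writing `-Q = Bᵀ B`, the constraint reads `F̄ v ≤ -‖B (1, ϑ)‖²`, i.e. `‖B (1, ϑ)‖² / v ≤ -F̄`
for `v > 0`. The quadratic-over-linear function `(v, x) ↦ ‖x‖² / v` is jointly convex on `v > 0`
and `ϑ ↦ B (1, ϑ)` is affine, so the set is the preimage of an epigraph of a convex function.
-/

open Matrix Set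

theorem sq_add_div_add_le {a b s t v w : ℝ} (ha : 0 ≤ a) (hb : 0 ≤ b) (hv : 0 < v) (hw : 0 < w)
    (hvw : 0 < a * v + b * w) :
    (a * s + b * t) ^ 2 / (a * v + b * w) ≤ a * (s ^ 2 / v) + b * (t ^ 2 / w) := by
  rw [div_le_iff₀ hvw]
  have key : (a * (s ^ 2 / v) + b * (t ^ 2 / w)) * (a * v + b * w) - (a * s + b * t) ^ 2
      = a * b * (s * w - t * v) ^ 2 / (v * w) := by
    field_simp
    ring
  have : 0 ≤ a * b * (s * w - t * v) ^ 2 / (v * w) := by positivity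
  linarith

theorem convexOn_norm_sq_div {E : Type*} [SeminormedAddCommGroup E] [NormedSpace ℝ E] :
    ConvexOn ℝ (Ioi 0 ×ˢ univ) fun p : ℝ × E => ‖p.2‖ ^ 2 / p.1 := by
  refine ⟨(convex_Ioi 0).prod convex_univ, ?_⟩
  rintro ⟨v, x⟩ ⟨hv, -⟩ ⟨w, y⟩ ⟨hw, -⟩ a b ha hb hab
  have hvw : 0 < a * v + b * w := (convex_Ioi (0 : ℝ)) hv hw ha hb hab
  have htri : ‖a • x + b • y‖ ≤ a * ‖x‖ + b * ‖y‖ := by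
    simpa [norm_smul, abs_of_nonneg ha, abs_of_nonneg hb] using norm_add_le (a • x) (b • y)
  calc ‖a • x + b • y‖ ^ 2 / (a * v + b * w)
      ≤ (a * ‖x‖ + b * ‖y‖) ^ 2 / (a * v + b * w) := by gcongr
    _ ≤ a * (‖x‖ ^ 2 / v) + b * (‖y‖ ^ 2 / w) := sq_add_div_add_le ha hb hv hw hvw

open MatrixOrder in
theorem Matrix.PosSemidef.exists_dotProduct_mulVec_eq_norm_sq {n : Type*} [Fintype n]
    {A : Matrix n n ℝ} (hA : A.PosSemidef) :
    ∃ f : (n → ℝ) →ₗ[ℝ] EuclideanSpace ℝ n, ∀ x, x ⬝ᵥ A *ᵥ x = ‖f x‖ ^ 2 := by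
  classical
  obtain ⟨B, rfl⟩ := CStarAlgebra.nonneg_iff_eq_star_mul_self.mp hA.nonneg
  refine ⟨(WithLp.linearEquiv 2 ℝ (n → ℝ)).symm.toLinearMap ∘ₗ B.mulVecLin, fun x => ?_⟩
  rw [← real_inner_self_eq_norm_sq]
  simp only [LinearMap.comp_apply, LinearEquiv.coe_coe, WithLp.linearEquiv_symm_apply,
    Matrix.mulVecLin_apply, EuclideanSpace.inner_eq_star_dotProduct]
  rw [← mulVec_mulVec, dotProduct_mulVec, star_eq_conjTranspose, vecMul_conjTranspose]
  simp only [star_trivial, AddEquiv.toEquiv_eq_coe, Equiv.invFun_as_coe,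
    AddEquiv.coe_toEquiv_symm, WithLp.addEquiv_symm_apply]

theorem convex_setOf_mul_le_neg_norm_sq {E : Type*} [SeminormedAddCommGroup E]
    [NormedSpace ℝ E] (u d : E) :
    Convex ℝ {p : ℝ × ℝ × ℝ | 0 < p.2.1 ∧ p.1 * p.2.1 ≤ -‖u + p.2.2 • d‖ ^ 2} := by
  have mem_iff (p : ℝ × ℝ × ℝ) (hp : 0 < p.2.1) :
      p.1 * p.2.1 ≤ -‖u + p.2.2 • d‖ ^ 2 ↔ ‖u + p.2.2 • d‖ ^ 2 / p.2.1 ≤ -p.1 := by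
    rw [div_le_iff₀ hp]
    constructor <;> intro h <;> linarith
  rintro ⟨F₁, v₁, θ₁⟩ ⟨hv₁, h₁⟩ ⟨F₂, v₂, θ₂⟩ ⟨hv₂, h₂⟩ a b ha hb hab
  rw [mem_iff _ hv₁] at h₁
  rw [mem_iff _ hv₂] at h₂
  have hv : 0 < a * v₁ + b * v₂ := (convex_Ioi (0 : ℝ)) hv₁ hv₂ ha hb hab
  refine ⟨hv, (mem_iff _ hv).2 ?_⟩
  have hcomb : u + (a * θ₁ + b * θ₂) • d = a • (u + θ₁ • d) + b • (u + θ₂ • d) := by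
    rw [smul_add, smul_add, add_add_add_comm, ← add_smul, hab, one_smul, smul_smul, smul_smul,
      add_smul]
  calc ‖u + (a * θ₁ + b * θ₂) • d‖ ^ 2 / (a * v₁ + b * v₂)
      ≤ a * (‖u + θ₁ • d‖ ^ 2 / v₁) + b * (‖u + θ₂ • d‖ ^ 2 / v₂) := by
        rw [hcomb]
        exact convexOn_norm_sq_div.2 (x := (v₁, u + θ₁ • d)) (y := (v₂, u + θ₂ • d))
          ⟨hv₁, trivial⟩ ⟨hv₂, trivial⟩ ha hb hab
    _ ≤ a * -F₁ + b * -F₂ := by gcongr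
    _ = -(a * F₁ + b * F₂) := by ring

theorem stmt_5_general (Q : Matrix (Fin 2) (Fin 2) ℝ) (hQ : (-Q).PosSemidef) :
    Convex ℝ {p : ℝ × ℝ × ℝ | 0 < p.2.1 ∧
      p.1 * p.2.1 ≤ (![1, p.2.2]) ⬝ᵥ (Q *ᵥ ![1, p.2.2])} := by
  obtain ⟨f, hf⟩ := hQ.exists_dotProduct_mulVec_eq_norm_sq
  have hform (θ : ℝ) : ![1, θ] ⬝ᵥ (Q *ᵥ ![1, θ]) = -‖f ![1, 0] + θ • f ![0, 1]‖ ^ 2 := by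
    have hvec : ![(1 : ℝ), θ] = ![1, 0] + θ • ![0, 1] := by
      ext i
      fin_cases i <;> simp
    rw [← map_smul, ← map_add, ← hvec, ← hf, neg_mulVec, dotProduct_neg, neg_neg]
  simp only [hform]
  exact convex_setOf_mul_le_neg_norm_sq _ _

/-- Relaxed EM cooling constraint: for Q negative semidefinite symmetric 2×2 and λ > 0, the set
{(F̄, v, ϑ) : v > 0, F̄·v ≤ (1, ϑ) Q (1, ϑ)ᵀ} is convex. -/
theorem stmt_5 (Q : Matrix (Fin 2) (Fin 2) ℝ) (hQ : (-Q).PosSemidef) (lam : ℝ) (hlam : 0 < lam) :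
    Convex ℝ {p : ℝ × ℝ × ℝ | 0 < p.2.1 ∧
      p.1 * p.2.1 ≤ (![1, p.2.2]) ⬝ᵥ (Q *ᵥ ![1, p.2.2])} :=
  stmt_5_general Q hQ
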